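/- arXiv:2111.03167 — 2 statements merged into one kernel-verified Lean document; each statement's English description precedes it below -/
import Mathlib

section
/- For every m ∈ {−1,1}³, measuring the (3,1)-QRAC encoding in the X basis recovers m₁ with probability 1/2 + 1/(2√3); precisely, tr(π_X⁺ · f(m)) = 1/2 + m₁/(2√3), where π_X⁺ = (1/2)·(I + X) is the projection onto the +1 eigenspace of X. -/
open Matrix

/-- The Pauli `X` matrix. -/
noncomputable def PX : Matrix (Fin 2) (Fin 2) ℂ := !![0, 1; 1, 0]

/-- The Pauli `Y` matrix. -/
noncomputable def PY : Matrix (Fin 2) (Fin 2) ℂ := !![0, -Complex.I; Complex.I, 0]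

/-- The Pauli `Z` matrix. -/
noncomputable def PZ : Matrix (Fin 2) (Fin 2) ℂ := !![1, 0; 0, -1]

/-- The `(3,1)`-QRAC encoding of three `±1`-valued bits into one qubit. -/
noncomputable def qrac3 (m : Fin 3 → ℝ) : Matrix (Fin 2) (Fin 2) ℂ :=
  (1 / 2 : ℂ) • ((1 : Matrix (Fin 2) (Fin 2) ℂ) +
    (1 / (Real.sqrt 3 : ℂ)) • ((m 0 : ℂ) • PX + (m 1 : ℂ) • PY + (m 2 : ℂ) • PZ))

/-- Projection onto the `+1` eigenspace of the Pauli `X` matrix. -/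
noncomputable def piXplus : Matrix (Fin 2) (Fin 2) ℂ :=
  (1 / 2 : ℂ) • ((1 : Matrix (Fin 2) (Fin 2) ℂ) + PX)

theorem qrac3_measure_X (m : Fin 3 → ℝ) (hm : ∀ i, m i = 1 ∨ m i = -1) :
    (piXplus * qrac3 m).trace = (1 / 2 : ℂ) + (m 0 : ℂ) / (2 * (Real.sqrt 3 : ℂ)) := by
  have hs : (Real.sqrt 3 : ℂ) ≠ 0 := by
    simpa using Complex.ofReal_ne_zero.mpr (Real.sqrt_ne_zero'.mpr (by norm_num))
  simp only [piXplus, qrac3, PX, PY, PZ, Matrix.one_fin_two, trace_fin_two]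
  simp [Matrix.mul_apply, Fin.sum_univ_two, Matrix.smul_apply, Matrix.add_apply]
  field_simp
  ring
end

section
/- For all i, j ∈ {1,2,3} and all m, m' ∈ {−1,1}³, the weight-2 Pauli expectation of a product of two (3,1)-QRAC encodings recovers the product of the corresponding bits up to a factor 1/3: tr((p_i ⊗ₖ p_j)·(f(m) ⊗ₖ f(m'))) = (1/3)·m_i·m'_j, where p₁ = X, p₂ = Y, p₃ = Z and ⊗ₖ denotes the Kronecker product of matrices. -/
open Matrix Kronecker

/-- The three non-identity Pauli matrices `p₁ = X, p₂ = Y, p₃ = Z`. -/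
noncomputable def pauliXYZ : Fin 3 → Matrix (Fin 2) (Fin 2) ℂ := ![PX, PY, PZ]

lemma qrac3_eq (m : Fin 3 → ℝ) : qrac3 m =
    !![(1/2) * (1 + (1/(Real.sqrt 3:ℂ)) * m 2), (1/2)*((1/(Real.sqrt 3:ℂ)) * (m 0 - m 1 * Complex.I));
       (1/2)*((1/(Real.sqrt 3:ℂ)) * (m 0 + m 1 * Complex.I)), (1/2)*(1 - (1/(Real.sqrt 3:ℂ)) * m 2)] := by
  ext i j
  fin_cases i <;> fin_cases j <;>
    simp [qrac3, PX, PY, PZ, Matrix.one_apply] <;> ring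

lemma trace_pauli_qrac (i : Fin 3) (m : Fin 3 → ℝ) :
    (pauliXYZ i * qrac3 m).trace = (1 / (Real.sqrt 3 : ℂ)) * (m i : ℂ) := by
  fin_cases i <;> rw [qrac3_eq] <;>
    simp [pauliXYZ, PX, PY, PZ, Matrix.mul_fin_two, Matrix.trace_fin_two_of] <;>
    ring_nf <;> simp [Complex.I_sq] <;> ring

theorem weight_two_pauli_of_qrac_pair (i j : Fin 3) (m m' : Fin 3 → ℝ)
    (hm : ∀ k, m k = 1 ∨ m k = -1) (hm' : ∀ k, m' k = 1 ∨ m' k = -1) :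
    ((pauliXYZ i ⊗ₖ pauliXYZ j) * (qrac3 m ⊗ₖ qrac3 m')).trace =
      (1 / 3 : ℂ) * (m i : ℂ) * (m' j : ℂ) := by
  rw [← Matrix.mul_kronecker_mul, Matrix.trace_kronecker, trace_pauli_qrac,
    trace_pauli_qrac]
  have h : Real.sqrt 3 * Real.sqrt 3 = 3 := Real.mul_self_sqrt (by norm_num)
  have hc : ((Real.sqrt 3 : ℂ)) * (Real.sqrt 3 : ℂ) = 3 := by exact_mod_cast h
  have hs : (1 / (Real.sqrt 3 : ℂ)) * (1 / (Real.sqrt 3 : ℂ)) = 1 / 3 := by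
    rw [div_mul_div_comm, one_mul, hc]
  linear_combination ((m i : ℂ) * (m' j : ℂ)) * hs
end
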